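/- Let M be a finite regular monoid and k a field, and let A := MonoidAlgebra k M. Let S_1, ..., S_n be the J-classes of M, enumerated so that M·s·M ⊆ M·t·M for s ∈ S_i, t ∈ S_j implies i ≤ j; set J_0 := 0 and J_i := the k-linear span of S_1 ∪ ... ∪ S_i. Fix i ∈ {1, ..., n} and let ε be a set of idempotents of M, all lying in S_i, such that the sets (Me) ∩ S_i for e ∈ ε are pairwise disjoint with union S_i. Then there is an isomorphism of left A-modules J_i/J_{i-1} ≅ ⊕_{e ∈ ε} (A·e)/(A·kJ_e), where kJ_e is the k-linear span in A of J_e := eMe ∖ Γ_e and A·kJ_e = { finite sums of elements a·x with a ∈ A, x ∈ kJ_e }. -/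

import Mathlib

/-!
`J_i` and `J_{i-1}` are the spans of the left ideals `V = S_1 ∪ … ∪ S_i` and
`U = S_1 ∪ … ∪ S_{i-1}` of `M`, and `A·e` is the span of the left ideal `Me ⊆ V`. Since the sets
`Me \ U = Me ∩ S_i` partition `V \ U = S_i`, comparing monomial bases gives
`k[V]/k[U] ≅ ⊕_e k[Me]/k[Me ∩ U]`. It remains to see that `A·kJ_e` meets `A·e` in `k[Me ∩ U]`.
An element of `J_e` lies strictly below `S_i`, because in a finite monoid an element `u ∈ eMe`
with `e ∈ MuM` is a unit of `eMe`. Conversely, if `x = me` lies in `U` and `x t x = x`, then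
`x = x·(etme)` with `etme ∈ J_e`.
-/

open DirectSum

/-- The set `MsM = { a·s·b : a, b ∈ M }` for an element `s` of a monoid `M`. -/
def MsM {M : Type*} [Monoid M] (s : M) : Set M := { x : M | ∃ a b : M, x = a * s * b }

/-- The `J`-class of an element `s` of a monoid `M`. -/
def JClass {M : Type*} [Monoid M] (s : M) : Set M := { x : M | MsM x = MsM s }

/-- The set `Me = { a·e : a ∈ M }`. -/
def Me {M : Type*} [Monoid M] (e : M) : Set M := { x : M | ∃ a : M, x = a * e }

/-- The submonoid `eMe = { e·a·e : a ∈ M }` of a monoid `M`, for an idempotent `e`. -/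
def eMe {M : Type*} [Monoid M] (e : M) : Set M := { a : M | ∃ c : M, a = e * c * e }

/-- The group `Γ_e` of invertible elements of the monoid `eMe` (identity element `e`). -/
def unitSet {M : Type*} [Monoid M] (e : M) : Set M :=
  { a : M | a ∈ eMe e ∧ ∃ b ∈ eMe e, a * b = e ∧ b * a = e }

/-- The set `J_e := eMe ∖ Γ_e`. -/
def Je {M : Type*} [Monoid M] (e : M) : Set M := eMe e \ unitSet e

section JOrder

variable {M : Type*} [Monoid M]

lemma mem_MsM_self (s : M) : s ∈ MsM s := ⟨1, 1, by simp⟩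

lemma MsM_subset_of_mem {x s : M} (h : x ∈ MsM s) : MsM x ⊆ MsM s := by
  obtain ⟨a, b, rfl⟩ := h
  rintro _ ⟨c, d, rfl⟩
  exact ⟨c * a, b * d, by simp only [mul_assoc]⟩

lemma MsM_mul_left_subset (m s : M) : MsM (m * s) ⊆ MsM s :=
  MsM_subset_of_mem ⟨m, 1, by simp⟩

lemma MsM_subset_of_mem_Me {x e : M} (hx : x ∈ Me e) : MsM x ⊆ MsM e := by
  obtain ⟨a, rfl⟩ := hx
  exact MsM_mul_left_subset a e

lemma MsM_subset_of_mem_eMe {x e : M} (hx : x ∈ eMe e) : MsM x ⊆ MsM e := by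
  obtain ⟨c, rfl⟩ := hx
  exact MsM_subset_of_mem ⟨e * c, 1, by simp⟩

end JOrder

section Corner

variable {M : Type*} [Monoid M] {e : M}

lemma idem_mem_eMe (he : e * e = e) : e ∈ eMe e := ⟨e, by rw [he, he]⟩

lemma idem_mul_of_mem_eMe (he : e * e = e) {x : M} (hx : x ∈ eMe e) : e * x = x := by
  obtain ⟨c, rfl⟩ := hx
  simp only [← mul_assoc, he]

lemma mul_idem_of_mem_eMe (he : e * e = e) {x : M} (hx : x ∈ eMe e) : x * e = x := by
  obtain ⟨c, rfl⟩ := hx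
  rw [mul_assoc, he]

lemma mul_mem_eMe {x y : M} (hx : x ∈ eMe e) (hy : y ∈ eMe e) :
    x * y ∈ eMe e := by
  obtain ⟨c, rfl⟩ := hx
  obtain ⟨d, rfl⟩ := hy
  exact ⟨c * e * e * d, by simp only [mul_assoc]⟩

/-- The finite monoid `eMe` is Dedekind-finite: left multiplication by `p` is onto, hence
injective. -/
lemma mul_eq_idem_symm_of_mem_eMe [Finite M] (he : e * e = e) {p q : M} (hp : p ∈ eMe e)
    (hq : q ∈ eMe e) (hpq : p * q = e) : q * p = e := by
  let f : eMe e → eMe e := fun x => ⟨p * x, mul_mem_eMe hp x.2⟩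
  have hf : Function.Surjective f := fun y =>
    ⟨⟨q * y, mul_mem_eMe hq y.2⟩,
      Subtype.ext (by
        change p * (q * y) = y
        rw [← mul_assoc, hpq, idem_mul_of_mem_eMe he y.2])⟩
  have hfqp : f ⟨q * p, mul_mem_eMe hq hp⟩ = f ⟨e, idem_mem_eMe he⟩ :=
    Subtype.ext (by
      change p * (q * p) = p * e
      rw [← mul_assoc, hpq, idem_mul_of_mem_eMe he hp, mul_idem_of_mem_eMe he hp])
  exact congrArg Subtype.val (Finite.injective_iff_surjective.mpr hf hfqp)

lemma mem_unitSet_of_idem_mem_MsM [Finite M] (he : e * e = e) {x : M} (hx : x ∈ eMe e)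
    (hex : e ∈ MsM x) : x ∈ unitSet e := by
  obtain ⟨a, b, hab⟩ := hex
  have hee : ∀ z, e * (e * z) = e * z := fun z => by rw [← mul_assoc, he]
  have hcorner : (e * a * e) * (x * (e * b * e)) = e := by
    obtain ⟨c, rfl⟩ := hx
    calc e * a * e * (e * c * e * (e * b * e))
        = e * (a * (e * c * e) * b) * e := by simp only [mul_assoc, hee]
      _ = e := by rw [← hab, he, he]
  have hright : x * ((e * b * e) * (e * a * e)) = e := by
    rw [← mul_assoc]
    exact mul_eq_idem_symm_of_mem_eMe he ⟨a, rfl⟩ (mul_mem_eMe hx ⟨b, rfl⟩) hcorner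
  have hinv : (e * b * e) * (e * a * e) ∈ eMe e := mul_mem_eMe ⟨b, rfl⟩ ⟨a, rfl⟩
  exact ⟨hx, _, hinv, hright, mul_eq_idem_symm_of_mem_eMe he hx hinv hright⟩

lemma idem_notMem_MsM_of_mem_Je [Finite M] (he : e * e = e) {x : M} (hx : x ∈ Je e) :
    e ∉ MsM x :=
  fun hex => hx.2 (mem_unitSet_of_idem_mem_MsM he hx.1 hex)

/-- For `x = m e` the witness is `u = e t m e`: `x u = x t x`, and `v u = e` would put `e` in
`MxM`. -/
lemma exists_mem_Je_mul_eq_self (he : e * e = e) {x t : M} (hx : x ∈ Me e)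
    (ht : x * t * x = x) (hex : e ∉ MsM x) : ∃ u ∈ Je e, x * u = x := by
  obtain ⟨m, rfl⟩ := hx
  refine ⟨e * (t * m) * e, ⟨⟨t * m, rfl⟩, ?_⟩, ?_⟩
  · rintro ⟨-, v, -, -, hvu⟩
    exact hex ⟨v * e * t, 1, hvu.symm.trans (by simp only [mul_assoc, mul_one])⟩
  · calc m * e * (e * (t * m) * e) = m * e * t * (m * e) := by
          simp only [mul_assoc, ← mul_assoc e e, he]
      _ = m * e := ht

end Corner

namespace MonoidAlgebra

open scoped MonoidAlgebra

section LeftIdeal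

variable (k : Type*) {M : Type*} [CommSemiring k] [Monoid M]

-- Left ideals of `M` are modelled as `SubMulAction M M`.
noncomputable def supportedLeftIdeal (U : SubMulAction M M) : Submodule k[M] k[M] :=
  submoduleOfSMulMem (supported k k (U : Set M)) fun g v hv => by
    rw [supported_eq_span_single] at hv ⊢
    induction hv using Submodule.span_induction with
    | mem x hx =>
      obtain ⟨u, hu, rfl⟩ := hx
      rw [smul_eq_mul, of_apply, single_mul_single, one_mul]
      exact Submodule.subset_span ⟨g • u, U.smul_mem g hu, rfl⟩
    | zero => rw [smul_zero]; exact zero_mem _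
    | add x y _ _ hx hy => rw [smul_add]; exact add_mem hx hy
    | smul c x _ hx => rw [smul_comm]; exact Submodule.smul_mem _ c hx

variable {k}

lemma mem_supportedLeftIdeal {U : SubMulAction M M} {x : k[M]} :
    x ∈ supportedLeftIdeal k U ↔ x ∈ supported k k (U : Set M) := Iff.rfl

variable (k) in
lemma coe_supportedLeftIdeal (U : SubMulAction M M) :
    (supportedLeftIdeal k U : Set k[M]) = Submodule.span k (of k M '' U) := by
  ext x
  simp only [SetLike.mem_coe, mem_supportedLeftIdeal, supported_eq_span_single, of_apply]

lemma single_mem_supportedLeftIdeal {U : SubMulAction M M} {u : M} (hu : u ∈ U) :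
    single u (1 : k) ∈ supportedLeftIdeal k U := by
  rw [mem_supportedLeftIdeal, supported_eq_span_single]
  exact Submodule.subset_span ⟨u, hu, rfl⟩

lemma supportedLeftIdeal_mono {U V : SubMulAction M M} (h : U ≤ V) :
    supportedLeftIdeal k U ≤ supportedLeftIdeal k V :=
  supported_mono (R := k) (S := k) h

@[elab_as_elim]
lemma supportedLeftIdeal_induction {U : SubMulAction M M} {P : supportedLeftIdeal k U → Prop}
    (single : ∀ u (hu : u ∈ U), P ⟨single u 1, single_mem_supportedLeftIdeal hu⟩)
    (zero : P 0) (add : ∀ x y, P x → P y → P (x + y)) (smul : ∀ (c : k) x, P x → P (c • x))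
    (x : supportedLeftIdeal k U) : P x := by
  obtain ⟨x, hx⟩ := x
  have hmem {y : k[M]}
      (hy : y ∈ Submodule.span k ((fun u => MonoidAlgebra.single u (1 : k)) '' U)) :
      y ∈ supportedLeftIdeal k U := by
    rwa [mem_supportedLeftIdeal, supported_eq_span_single]
  have hspan := hx
  rw [mem_supportedLeftIdeal, supported_eq_span_single] at hspan
  induction hspan using Submodule.span_induction with
  | mem y hy => obtain ⟨u, hu, rfl⟩ := hy; exact single u hu
  | zero => exact zero
  | add y z hy hz ihy ihz => exact add _ _ (ihy (hmem hy)) (ihz (hmem hz))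
  | smul c y hy ihy => exact smul c _ (ihy (hmem hy))

lemma supportedLeftIdeal_linearMap_ext {N : Type*} [AddCommMonoid N] [Module k N]
    {U : SubMulAction M M} {f g : supportedLeftIdeal k U →ₗ[k] N}
    (h : ∀ u (hu : u ∈ U), f ⟨single u 1, single_mem_supportedLeftIdeal hu⟩ =
      g ⟨single u 1, single_mem_supportedLeftIdeal hu⟩) : f = g := by
  ext x
  induction x using supportedLeftIdeal_induction with
  | single u hu => exact h u hu
  | zero => rw [map_zero, map_zero]
  | add x y hx hy => rw [map_add, map_add, hx, hy]
  | smul c x hx => rw [map_smul, map_smul, hx]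

end LeftIdeal

section Layer

open Function

variable {k : Type*} {M : Type*} [CommRing k] [Monoid M]

variable (k) in
abbrev SupportedQuotient (U V : SubMulAction M M) : Type _ :=
  supportedLeftIdeal k V ⧸ (supportedLeftIdeal k U).comap (supportedLeftIdeal k V).subtype

-- Instance search does not unfold `SupportedQuotient` inside a family `⨁ a, …`.
noncomputable instance (U V : SubMulAction M M) : AddCommGroup (SupportedQuotient k U V) :=
  Submodule.Quotient.addCommGroup _

variable (k) in
noncomputable def supportedQuotientMap (U : SubMulAction M M) {W V : SubMulAction M M}
    (h : W ≤ V) : SupportedQuotient k U W →ₗ[k[M]] SupportedQuotient k U V :=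
  Submodule.mapQ _ _ (Submodule.inclusion (supportedLeftIdeal_mono h)) fun _ hx => hx

lemma supportedQuotientMap_mk_single {U W V : SubMulAction M M} (h : W ≤ V) {w : M}
    (hw : w ∈ W) :
    supportedQuotientMap k U h
        (Submodule.Quotient.mk ⟨single w 1, single_mem_supportedLeftIdeal hw⟩) =
      Submodule.Quotient.mk ⟨single w 1, single_mem_supportedLeftIdeal (h hw)⟩ :=
  rfl

lemma mk_single_eq_zero {U V : SubMulAction M M} {u : M} (hu : u ∈ U) (hV : u ∈ V) :
    (Submodule.Quotient.mk ⟨single u 1, single_mem_supportedLeftIdeal hV⟩ :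
      SupportedQuotient k U V) = 0 :=
  (Submodule.Quotient.mk_eq_zero _).mpr (single_mem_supportedLeftIdeal hu)

variable {κ : Type*} [DecidableEq κ] {U V : SubMulAction M M} {W : κ → SubMulAction M M}

lemma surjective_toModule_supportedQuotientMap (hWV : ∀ a, W a ≤ V)
    (hcover : ∀ v ∈ V, v ∉ U → ∃ a, v ∈ W a) :
    Function.Surjective
      (DirectSum.toModule k[M] κ _ fun a => supportedQuotientMap k U (hWV a)) := by
  set Ψ := DirectSum.toModule k[M] κ _ fun a => supportedQuotientMap k U (hWV a)
  rintro ⟨x⟩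
  change Submodule.Quotient.mk x ∈ LinearMap.range Ψ
  induction x using supportedLeftIdeal_induction with
  | single v hv =>
    by_cases hvU : v ∈ U
    · rw [mk_single_eq_zero hvU hv]
      exact zero_mem _
    · obtain ⟨a, hva⟩ := hcover v hv hvU
      refine ⟨DirectSum.lof k[M] κ _ a
        (Submodule.Quotient.mk ⟨single v 1, single_mem_supportedLeftIdeal hva⟩), ?_⟩
      rw [DirectSum.toModule_lof, supportedQuotientMap_mk_single _ hva]
  | zero => exact zero_mem _
  | add x y hx hy => rw [Submodule.Quotient.mk_add]; exact add_mem hx hy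
  | smul c x hx =>
    rw [Submodule.Quotient.mk_smul]
    exact (LinearMap.range Ψ).restrictScalars k |>.smul_mem c hx

variable (k U W) in
open Classical in
/-- Lifts the inverse of the comparison map `⨁ a, k[W a]/k[U] → k[V]/k[U]` to `k[M]`. -/
noncomputable def layerRetraction : k[M] →ₗ[k] ⨁ a, SupportedQuotient k U (W a) :=
  (basis M k).constr k fun m =>
    if h : ∃ a, m ∈ W a ∧ m ∉ U then
      DirectSum.lof k κ _ h.choose
        (Submodule.Quotient.mk ⟨single m 1, single_mem_supportedLeftIdeal h.choose_spec.1⟩)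
    else 0

open Classical in
lemma layerRetraction_single (m : M) :
    layerRetraction k U W (single m 1) =
      if h : ∃ a, m ∈ W a ∧ m ∉ U then
        DirectSum.lof k κ _ h.choose
          (Submodule.Quotient.mk ⟨single m 1, single_mem_supportedLeftIdeal h.choose_spec.1⟩)
      else 0 :=
  (basis M k).constr_basis k _ m

lemma layerRetraction_single_of_mem (hdisj : Pairwise (Disjoint on fun a => (W a : Set M) \ U))
    {a : κ} {m : M} (ha : m ∈ W a) (hU : m ∉ U) :
    layerRetraction k U W (single m 1) =
      DirectSum.lof k κ _ a
        (Submodule.Quotient.mk ⟨single m 1, single_mem_supportedLeftIdeal ha⟩) := by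
  have h : ∃ a, m ∈ W a ∧ m ∉ U := ⟨a, ha, hU⟩
  rw [layerRetraction_single, dif_pos h]
  obtain rfl : h.choose = a := by
    by_contra hne
    exact Set.disjoint_left.mp (hdisj hne) h.choose_spec ⟨ha, hU⟩
  rfl

lemma layerRetraction_single_of_mem_left {m : M} (hm : m ∈ U) :
    layerRetraction k U W (single m 1) = 0 := by
  rw [layerRetraction_single, dif_neg]
  rintro ⟨a, -, hU⟩
  exact hU hm

lemma layerRetraction_eq_zero_of_mem {x : k[M]} (hx : x ∈ supportedLeftIdeal k U) :
    layerRetraction k U W x = 0 := by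
  rw [mem_supportedLeftIdeal, supported_eq_span_single] at hx
  have hker : Submodule.span k ((fun m => single m (1 : k)) '' U) ≤
      LinearMap.ker (layerRetraction k U W) :=
    Submodule.span_le.mpr fun _ ⟨_, hu, hm⟩ => hm ▸ layerRetraction_single_of_mem_left hu
  exact hker hx

lemma layerRetraction_comp_subtype (hdisj : Pairwise (Disjoint on fun a => (W a : Set M) \ U))
    (a : κ) :
    layerRetraction k U W ∘ₗ (supportedLeftIdeal k (W a)).subtype.restrictScalars k =
      DirectSum.lof k κ _ a ∘ₗ
        ((supportedLeftIdeal k U).comap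
          (supportedLeftIdeal k (W a)).subtype).mkQ.restrictScalars k := by
  refine supportedLeftIdeal_linearMap_ext fun w hw => ?_
  by_cases hwU : w ∈ U
  · change layerRetraction k U W (single w 1) = DirectSum.lof k κ _ a (Submodule.Quotient.mk _)
    rw [layerRetraction_single_of_mem_left hwU, mk_single_eq_zero hwU hw, map_zero]
  · exact layerRetraction_single_of_mem hdisj hw hwU

lemma injective_toModule_supportedQuotientMap (hWV : ∀ a, W a ≤ V)
    (hdisj : Pairwise (Disjoint on fun a => (W a : Set M) \ U)) :
    Function.Injective
      (DirectSum.toModule k[M] κ _ fun a => supportedQuotientMap k U (hWV a)) := by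
  set Ψ := DirectSum.toModule k[M] κ _ fun a => supportedQuotientMap k U (hWV a)
  have hwd : ∀ v v' : supportedLeftIdeal k V,
      (Submodule.Quotient.mk v : SupportedQuotient k U V) = Submodule.Quotient.mk v' →
        layerRetraction k U W v = layerRetraction k U W v' := by
    intro v v' h
    rw [← sub_eq_zero, ← map_sub]
    exact layerRetraction_eq_zero_of_mem
      ((Submodule.Quotient.eq ((supportedLeftIdeal k U).comap _)).mp h)
  have hlift : ∀ x, ∃ v : supportedLeftIdeal k V,
      Ψ x = Submodule.Quotient.mk v ∧ layerRetraction k U W v = x := by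
    intro x
    induction x using DirectSum.induction_on with
    | zero => exact ⟨0, by rw [map_zero, Submodule.Quotient.mk_zero], map_zero _⟩
    | of a z =>
      obtain ⟨w, rfl⟩ := Submodule.Quotient.mk_surjective _ z
      refine ⟨Submodule.inclusion (supportedLeftIdeal_mono (hWV a)) w, ?_,
        LinearMap.congr_fun (layerRetraction_comp_subtype hdisj a) w⟩
      rw [← DirectSum.lof_eq_of k[M], DirectSum.toModule_lof]
      rfl
    | add x y hx hy =>
      obtain ⟨v, hv, hvx⟩ := hx
      obtain ⟨v', hv', hvy⟩ := hy
      exact ⟨v + v', by rw [map_add, hv, hv', Submodule.Quotient.mk_add],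
        by rw [Submodule.coe_add, map_add, hvx, hvy]⟩
  intro x y h
  obtain ⟨v, hv, rfl⟩ := hlift x
  obtain ⟨v', hv', rfl⟩ := hlift y
  exact hwd v v' (hv.symm.trans (h.trans hv'))

variable (k) in
noncomputable def supportedQuotientEquivDirectSum (hWV : ∀ a, W a ≤ V)
    (hdisj : Pairwise (Disjoint on fun a => (W a : Set M) \ U))
    (hcover : ∀ v ∈ V, v ∉ U → ∃ a, v ∈ W a) :
    SupportedQuotient k U V ≃ₗ[k[M]] ⨁ a, SupportedQuotient k U (W a) :=
  (LinearEquiv.ofBijective _ ⟨injective_toModule_supportedQuotientMap hWV hdisj,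
    surjective_toModule_supportedQuotientMap hWV hcover⟩).symm

end Layer

end MonoidAlgebra

noncomputable def Submodule.quotientComapSubtypeEquiv {R N : Type*} [Ring R] [AddCommGroup N]
    [Module R N] {P P' K K' : Submodule R N} (hP : P = P')
    (hK : K.comap P'.subtype = K'.comap P'.subtype) :
    (P ⧸ K.comap P.subtype) ≃ₗ[R] P' ⧸ K'.comap P'.subtype := by
  subst hP
  exact Submodule.quotEquivOfEq _ _ hK

section Principal

open MonoidAlgebra

variable {k M : Type*} [CommRing k] [Monoid M]

def principalLeftIdeal (e : M) : SubMulAction M M where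
  carrier := Me e
  smul_mem' m := by
    rintro _ ⟨a, rfl⟩
    exact ⟨m * a, by rw [smul_eq_mul, mul_assoc]⟩

lemma span_singleton_of_eq_supportedLeftIdeal (e : M) :
    Submodule.span k[M] {of k M e} = supportedLeftIdeal k (principalLeftIdeal e) := by
  refine le_antisymm (Submodule.span_le.mpr ?_) fun x hx => ?_
  · rw [Set.singleton_subset_iff, of_apply]
    exact single_mem_supportedLeftIdeal ⟨1, (one_mul e).symm⟩
  · rw [mem_supportedLeftIdeal, supported_eq_span_single] at hx
    refine (Submodule.span_le (p := (Submodule.span k[M] {of k M e}).restrictScalars k)).mpr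
      ?_ hx
    rintro _ ⟨_, ⟨a, rfl⟩, rfl⟩
    exact Submodule.mem_span_singleton.mpr
      ⟨of k M a, by rw [smul_eq_mul, of_apply, of_apply, single_mul_single, one_mul]⟩

lemma comap_span_Je_eq_comap_supportedLeftIdeal {e : M} {U : SubMulAction M M}
    (hJe : Je e ⊆ U) (hfix : ∀ x ∈ Me e, x ∈ U → ∃ u ∈ Je e, x * u = x) :
    (Submodule.span k[M] (of k M '' Je e)).comap
        (supportedLeftIdeal k (principalLeftIdeal e)).subtype =
      (supportedLeftIdeal k U).comap (supportedLeftIdeal k (principalLeftIdeal e)).subtype := by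
  ext ⟨x, hx⟩
  simp only [Submodule.mem_comap, Submodule.subtype_apply]
  constructor
  · refine fun h => (Submodule.span_le.mpr ?_) h
    rintro _ ⟨u, hu, rfl⟩
    exact single_mem_supportedLeftIdeal (hJe hu)
  · intro hxU
    have hxMeU : x ∈ supported k k (Me e ∩ U) :=
      mem_supported.mpr (Set.subset_inter (mem_supported.mp hx) (mem_supported.mp hxU))
    rw [supported_eq_span_single] at hxMeU
    refine (Submodule.span_le (p := (Submodule.span k[M] (of k M '' Je e)).restrictScalars k)).mpr
      ?_ hxMeU
    rintro _ ⟨m, ⟨hm, hmU⟩, rfl⟩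
    obtain ⟨u, hu, hmu⟩ := hfix m hm hmU
    have hsingle : single m (1 : k) = of k M m • of k M u := by
      rw [smul_eq_mul, of_apply, of_apply, single_mul_single, one_mul, hmu]
    change single m 1 ∈ Submodule.span k[M] (of k M '' Je e)
    rw [hsingle]
    exact Submodule.smul_mem _ _ (Submodule.subset_span ⟨u, hu, rfl⟩)

end Principal

section JClassFiltration

variable {M ι : Type*} [Monoid M] [PartialOrder ι] {S : ι → Set M}

def lowerClassesIdeal (hcover : ∀ s : M, ∃ i, s ∈ S i)
    (horder : ∀ (i j : ι) (s t : M), s ∈ S i → t ∈ S j → MsM s ⊆ MsM t → i ≤ j)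
    (I : LowerSet ι) : SubMulAction M M where
  carrier := ⋃ j ∈ I, S j
  smul_mem' m s hs := by
    obtain ⟨j, hj, hs⟩ := Set.mem_iUnion₂.mp hs
    obtain ⟨j', hj'⟩ := hcover (m * s)
    exact Set.mem_iUnion₂.mpr
      ⟨j', I.lower (horder j' j _ s hj' hs (MsM_mul_left_subset m s)) hj, hj'⟩

lemma mem_lowerClassesIdeal_Iic (hcover : ∀ s : M, ∃ i, s ∈ S i)
    (horder : ∀ (i j : ι) (s t : M), s ∈ S i → t ∈ S j → MsM s ⊆ MsM t → i ≤ j)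
    {i : ι} {s : M} (hs : s ∈ S i) : s ∈ lowerClassesIdeal hcover horder (LowerSet.Iic i) :=
  Set.mem_iUnion₂.mpr ⟨i, LowerSet.mem_Iic_iff.mpr le_rfl, hs⟩

lemma mem_of_mem_lowerClassesIdeal_Iic_of_notMem_Iio (hcover : ∀ s : M, ∃ i, s ∈ S i)
    (horder : ∀ (i j : ι) (s t : M), s ∈ S i → t ∈ S j → MsM s ⊆ MsM t → i ≤ j)
    {i : ι} {s : M} (hle : s ∈ lowerClassesIdeal hcover horder (LowerSet.Iic i))
    (hlt : s ∉ lowerClassesIdeal hcover horder (LowerSet.Iio i)) : s ∈ S i := by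
  obtain ⟨j, hj, hs⟩ := Set.mem_iUnion₂.mp hle
  obtain rfl : j = i := by
    by_contra hne
    exact hlt (Set.mem_iUnion₂.mpr ⟨j, lt_of_le_of_ne hj hne, hs⟩)
  exact hs

lemma mem_lowerClassesIdeal_Iio_iff (hclass : ∀ i, ∃ s : M, S i = JClass s)
    (hcover : ∀ s : M, ∃ i, s ∈ S i)
    (horder : ∀ (i j : ι) (s t : M), s ∈ S i → t ∈ S j → MsM s ⊆ MsM t → i ≤ j)
    {i : ι} {e x : M} (he : e ∈ S i) (hxe : MsM x ⊆ MsM e) :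
    x ∈ lowerClassesIdeal hcover horder (LowerSet.Iio i) ↔ e ∉ MsM x := by
  constructor
  · intro hx hex
    obtain ⟨j, hji, hxj⟩ := Set.mem_iUnion₂.mp hx
    exact (LowerSet.mem_Iio_iff.mp hji).not_ge (horder i j e x he hxj (MsM_subset_of_mem hex))
  · intro hex
    obtain ⟨j, hxj⟩ := hcover x
    refine Set.mem_iUnion₂.mpr ⟨j, LowerSet.mem_Iio_iff.mpr
      (lt_of_le_of_ne (horder j i x e hxj he hxe) ?_), hxj⟩
    rintro rfl
    obtain ⟨s, hs⟩ := hclass j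
    rw [hs] at he hxj
    exact hex (hxj.trans he.symm ▸ mem_MsM_self e)

lemma principalLeftIdeal_le_lowerClassesIdeal_Iic (hcover : ∀ s : M, ∃ i, s ∈ S i)
    (horder : ∀ (i j : ι) (s t : M), s ∈ S i → t ∈ S j → MsM s ⊆ MsM t → i ≤ j)
    {i : ι} {e : M} (he : e ∈ S i) :
    principalLeftIdeal e ≤ lowerClassesIdeal hcover horder (LowerSet.Iic i) := by
  rintro _ ⟨a, rfl⟩
  exact SubMulAction.smul_mem _ a (mem_lowerClassesIdeal_Iic hcover horder he)

lemma Je_subset_lowerClassesIdeal_Iio [Finite M] (hclass : ∀ i, ∃ s : M, S i = JClass s)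
    (hcover : ∀ s : M, ∃ i, s ∈ S i)
    (horder : ∀ (i j : ι) (s t : M), s ∈ S i → t ∈ S j → MsM s ⊆ MsM t → i ≤ j)
    {i : ι} {e : M} (hidem : e * e = e) (he : e ∈ S i) :
    Je e ⊆ lowerClassesIdeal hcover horder (LowerSet.Iio i) := fun _ hy =>
  (mem_lowerClassesIdeal_Iio_iff hclass hcover horder he (MsM_subset_of_mem_eMe hy.1)).mpr
    (idem_notMem_MsM_of_mem_Je hidem hy)

end JClassFiltration

open MonoidAlgebra Function

theorem statement16_general {M : Type*} [Monoid M] [Finite M]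
    (hreg : ∀ s : M, ∃ t : M, s * t * s = s)
    {k : Type*} [Field k]
    {n : ℕ} (S : Fin n → Set M)
    (hclass : ∀ i, ∃ s : M, S i = JClass s)
    (hcover : ∀ s : M, ∃ i, s ∈ S i)
    (horder : ∀ (i j : Fin n) (s t : M), s ∈ S i → t ∈ S j → MsM s ⊆ MsM t → i ≤ j)
    (i : Fin n) (ε : Set M)
    (hε : ∀ e ∈ ε, e * e = e ∧ e ∈ S i)
    (hdisjε : ε.PairwiseDisjoint fun e => Me e ∩ S i)
    (hunion : (⋃ e ∈ ε, Me e ∩ S i) = S i) :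
    ∃ JiA Jim1A : Submodule (MonoidAlgebra k M) (MonoidAlgebra k M),
      (JiA : Set (MonoidAlgebra k M)) =
        (Submodule.span k (⇑(MonoidAlgebra.of k M) '' ⋃ (j : Fin n) (_ : j ≤ i), S j) :
          Set (MonoidAlgebra k M)) ∧
      (Jim1A : Set (MonoidAlgebra k M)) =
        (Submodule.span k (⇑(MonoidAlgebra.of k M) '' ⋃ (j : Fin n) (_ : j < i), S j) :
          Set (MonoidAlgebra k M)) ∧
      Nonempty
        ((↥JiA ⧸ Submodule.comap JiA.subtype Jim1A) ≃ₗ[MonoidAlgebra k M]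
          (⨁ e : ↥ε,
            ↥(Submodule.span (MonoidAlgebra k M) {MonoidAlgebra.of k M e.val}) ⧸
              Submodule.comap
                (Submodule.span (MonoidAlgebra k M) {MonoidAlgebra.of k M e.val}).subtype
                (Submodule.span (MonoidAlgebra k M)
                  (⇑(MonoidAlgebra.of k M) '' Je e.val)))) := by
  classical
  set V := lowerClassesIdeal hcover horder (LowerSet.Iic i)
  set U := lowerClassesIdeal hcover horder (LowerSet.Iio i)
  have hlayer : ∀ x ∈ V, x ∉ U → x ∈ S i := fun x =>
    mem_of_mem_lowerClassesIdeal_Iic_of_notMem_Iio hcover horder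
  have hWV (e : ε) : principalLeftIdeal e.1 ≤ V :=
    principalLeftIdeal_le_lowerClassesIdeal_Iic hcover horder (hε e e.2).2
  have hsdiff (e : ε) : (principalLeftIdeal e.1 : Set M) \ U ⊆ Me e.1 ∩ S i :=
    fun x hx => ⟨hx.1, hlayer x (hWV e hx.1) hx.2⟩
  have hdisj : Pairwise (Disjoint on fun e : ε => (principalLeftIdeal e.1 : Set M) \ U) :=
    fun a b hab => (hdisjε a.2 b.2 (Subtype.coe_ne_coe.mpr hab)).mono (hsdiff a) (hsdiff b)
  have hcoverε : ∀ v ∈ V, v ∉ U → ∃ e : ε, v ∈ principalLeftIdeal e.1 := fun v hv hvU => by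
    obtain ⟨e, he, hve, -⟩ := Set.mem_iUnion₂.mp (hunion ▸ hlayer v hv hvU)
    exact ⟨⟨e, he⟩, hve⟩
  have hfix (e : ε) (x : M) (hx : x ∈ Me e.1) (hxU : x ∈ U) : ∃ u ∈ Je e.1, x * u = x :=
    exists_mem_Je_mul_eq_self (hε e e.2).1 hx (hreg x).choose_spec
      ((mem_lowerClassesIdeal_Iio_iff hclass hcover horder (hε e e.2).2
        (MsM_subset_of_mem_Me hx)).mp hxU)
  refine ⟨supportedLeftIdeal k V, supportedLeftIdeal k U, coe_supportedLeftIdeal k V,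
    coe_supportedLeftIdeal k U, ⟨(supportedQuotientEquivDirectSum k hWV hdisj hcoverε).trans
      (DFinsupp.mapRange.linearEquiv fun e => (Submodule.quotientComapSubtypeEquiv
        (span_singleton_of_eq_supportedLeftIdeal e.1)
        (comap_span_Je_eq_comap_supportedLeftIdeal
          (Je_subset_lowerClassesIdeal_Iio hclass hcover horder (hε e e.2).1 (hε e e.2).2)
          (hfix e))).symm)⟩⟩

/-- Let `M` be a finite regular monoid, `k` a field, and
`A := MonoidAlgebra k M`.  Let `S_1, ..., S_n` be the `J`-classes of `M`, enumerated so
that `M·s·M ⊆ M·t·M` for `s ∈ S_i`, `t ∈ S_j` implies `i ≤ j`; let `J_i` be the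
`k`-linear span of `S_1 ∪ ... ∪ S_i` (and `J_0 := 0`).  Fix `i` and let `ε` be a set of
idempotents of `M`, all lying in `S_i`, such that the sets `(Me) ∩ S_i` for `e ∈ ε` are
pairwise disjoint with union `S_i`.  Then, as left `A`-modules,
`J_i/J_{i-1} ≅ ⊕_{e ∈ ε} (A·e)/(A·kJ_e)`. -/
theorem statement16 {M : Type*} [Monoid M] [Finite M]
    (hreg : ∀ s : M, ∃ t : M, s * t * s = s)
    {k : Type*} [Field k]
    {n : ℕ} (S : Fin n → Set M)
    (hclass : ∀ i, ∃ s : M, S i = JClass s)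
    (hcover : ∀ s : M, ∃ i, s ∈ S i)
    (hdisj : ∀ i j, i ≠ j → Disjoint (S i) (S j))
    (horder : ∀ (i j : Fin n) (s t : M), s ∈ S i → t ∈ S j → MsM s ⊆ MsM t → i ≤ j)
    (i : Fin n) (ε : Set M)
    (hε : ∀ e ∈ ε, e * e = e ∧ e ∈ S i)
    (hdisjε : ε.PairwiseDisjoint fun e => Me e ∩ S i)
    (hunion : (⋃ e ∈ ε, Me e ∩ S i) = S i) :
    ∃ JiA Jim1A : Submodule (MonoidAlgebra k M) (MonoidAlgebra k M),
      (JiA : Set (MonoidAlgebra k M)) =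
        (Submodule.span k (⇑(MonoidAlgebra.of k M) '' ⋃ (j : Fin n) (_ : j ≤ i), S j) :
          Set (MonoidAlgebra k M)) ∧
      (Jim1A : Set (MonoidAlgebra k M)) =
        (Submodule.span k (⇑(MonoidAlgebra.of k M) '' ⋃ (j : Fin n) (_ : j < i), S j) :
          Set (MonoidAlgebra k M)) ∧
      Nonempty
        ((↥JiA ⧸ Submodule.comap JiA.subtype Jim1A) ≃ₗ[MonoidAlgebra k M]
          (⨁ e : ↥ε,
            ↥(Submodule.span (MonoidAlgebra k M) {MonoidAlgebra.of k M e.val}) ⧸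
              Submodule.comap
                (Submodule.span (MonoidAlgebra k M) {MonoidAlgebra.of k M e.val}).subtype
                (Submodule.span (MonoidAlgebra k M)
                  (⇑(MonoidAlgebra.of k M) '' Je e.val)))) :=
  statement16_general hreg S hclass hcover horder i ε hε hdisjε hunion
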